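/- Let ρ be a representation of ℤ² into SL₂(ℂ) with non-trivial image (not contained in {±I}). Then the subspace of sl₂(ℂ) fixed by Ad∘ρ of every element is one-dimensional. -/

import Mathlib

/-!
Pick `g₀` with `ρ g₀ ≠ ±1`. In `SL₂` the only scalar matrices are `±1`, so the traceless part
`A` of `ρ g₀` is nonzero, and since `ℤ²` is abelian `A` commutes with every `ρ g`. Conversely a
traceless `X` fixed by `Ad (ρ g₀)` commutes with `A`; in suitable coordinates the commutator of two
traceless `2 × 2` matrices is their cross product, which vanishes only when they are linearly
dependent. Hence the fixed subspace is the line `ℂ ∙ A`.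
-/

namespace Matrix

variable {K : Type*} [Field K]

/-- Coordinates on traceless `2 × 2` matrices in which the commutator becomes the cross product,
up to a factor `2` in two of the entries. -/
def sl2Coords (X : Matrix (Fin 2) (Fin 2) K) : Fin 3 → K := ![X 0 0, X 0 1, X 1 0]

lemma eq_smul_of_sl2Coords_eq_smul {X Y : Matrix (Fin 2) (Fin 2) K} (hX : trace X = 0)
    (hY : trace Y = 0) {a : K} (h : sl2Coords X = a • sl2Coords Y) : X = a • Y := by
  rw [trace_fin_two] at hX hY
  have h0 := congrFun h 0
  have h1 := congrFun h 1
  have h2 := congrFun h 2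
  simp only [sl2Coords, cons_val_zero, cons_val_one, cons_val, Pi.smul_apply, smul_eq_mul]
    at h0 h1 h2
  ext i j
  fin_cases i <;> fin_cases j
  · simpa using h0
  · simpa using h1
  · simpa using h2
  · simp only [Fin.mk_one, smul_apply, smul_eq_mul]
    linear_combination hX - h0 - a * hY

lemma cross_sl2Coords_eq_zero_of_commute [NeZero (2 : K)] {X Y : Matrix (Fin 2) (Fin 2) K}
    (hX : trace X = 0) (hY : trace Y = 0) (h : Commute X Y) :
    sl2Coords X ⨯₃ sl2Coords Y = 0 := by
  rw [trace_fin_two] at hX hY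
  have e := fun i j ↦ congrFun (congrFun h.eq i) j
  simp only [mul_apply, Fin.sum_univ_two] at e
  ext i
  fin_cases i <;>
    simp only [sl2Coords, Fin.zero_eta, Fin.mk_one, Fin.reduceFinMk, cross_apply, cons_val_zero,
      cons_val_one, cons_val, Pi.zero_apply]
  · linear_combination e 0 0
  · apply mul_left_cancel₀ (two_ne_zero : (2 : K) ≠ 0)
    linear_combination e 1 0 + X 1 0 * hY - Y 1 0 * hX
  · apply mul_left_cancel₀ (two_ne_zero : (2 : K) ≠ 0)
    linear_combination e 0 1 + Y 0 1 * hX - X 0 1 * hY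

theorem exists_smul_eq_of_commute_of_trace_eq_zero [NeZero (2 : K)]
    {X Y : Matrix (Fin 2) (Fin 2) K} (hX : trace X = 0) (hY : trace Y = 0) (hY₀ : Y ≠ 0)
    (h : Commute Y X) : ∃ a : K, a • Y = X := by
  have hYc : sl2Coords Y ≠ 0 := fun h₀ ↦ hY₀ <|
    eq_smul_of_sl2Coords_eq_smul (a := 0) hY (trace_zero _ _) (by simp [h₀]) |>.trans (smul_zero _)
  have hdep : ¬ LinearIndependent K ![sl2Coords Y, sl2Coords X] := by
    rw [← crossProduct_ne_zero_iff_linearIndependent, not_not]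
    exact cross_sl2Coords_eq_zero_of_commute hY hX h
  rw [LinearIndependent.pair_iff' hYc] at hdep
  push Not at hdep
  obtain ⟨a, ha⟩ := hdep
  exact ⟨a, (eq_smul_of_sl2Coords_eq_smul hX hY ha.symm).symm⟩

def tracelessPart (A : Matrix (Fin 2) (Fin 2) K) : Matrix (Fin 2) (Fin 2) K :=
  A - (trace A / 2) • 1

lemma trace_tracelessPart [NeZero (2 : K)] (A : Matrix (Fin 2) (Fin 2) K) :
    trace (tracelessPart A) = 0 := by
  simp [tracelessPart, trace_sub, trace_smul, div_mul_cancel₀ _ (two_ne_zero' K)]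

lemma _root_.Commute.tracelessPart_right {A B : Matrix (Fin 2) (Fin 2) K} (h : Commute B A) :
    Commute B (tracelessPart A) :=
  h.sub_right ((Commute.one_right B).smul_right _)

namespace SpecialLinearGroup

variable {n R : Type*} [Fintype n] [DecidableEq n] [CommRing R]

lemma mul_mul_inv_eq_self_iff_commute (A : SpecialLinearGroup n R) (X : Matrix n n R) :
    (A : Matrix n n R) * (X * ((A⁻¹ : SpecialLinearGroup n R) : Matrix n n R)) = X ↔
      Commute (A : Matrix n n R) X := by
  have hinv : ((A⁻¹ : SpecialLinearGroup n R) : Matrix n n R) = ↑(toGL A)⁻¹ := by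
    rw [← map_inv, coe_GL_coe_matrix]
  rw [hinv, ← mul_assoc, Units.mul_inv_eq_iff_eq_mul, coe_GL_coe_matrix, commute_iff_eq, eq_comm]

lemma eq_one_or_eq_neg_one_of_coe_eq_smul_one [IsDomain R] {A : SpecialLinearGroup (Fin 2) R}
    {r : R} (h : (A : Matrix (Fin 2) (Fin 2) R) = r • 1) : A = 1 ∨ A = -1 := by
  have hr : r ^ 2 = 1 := by simpa [h, det_smul] using A.det_coe
  rcases sq_eq_one_iff.mp hr with rfl | rfl
  · exact .inl <| Subtype.ext <| by simpa using h
  · exact .inr <| Subtype.ext <| by simpa using h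

end SpecialLinearGroup

end Matrix

open Matrix in
theorem fixed_subspace_of_nontrivial_Z2_rep
    (ρ : Multiplicative (ℤ × ℤ) →* Matrix.SpecialLinearGroup (Fin 2) ℂ)
    (hnt : ¬ ∀ g, ρ g = 1 ∨ ρ g = -1) :
    Module.finrank ℂ
      ↥((LinearMap.ker (Matrix.traceLinearMap (Fin 2) ℂ ℂ)) ⊓
        ⨅ g : Multiplicative (ℤ × ℤ),
          LinearMap.ker
            ((LinearMap.mulLeft ℂ ((ρ g : Matrix (Fin 2) (Fin 2) ℂ))).comp
                (LinearMap.mulRight ℂ (((ρ g)⁻¹ : Matrix.SpecialLinearGroup (Fin 2) ℂ) :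
                  Matrix (Fin 2) (Fin 2) ℂ)) -
              LinearMap.id)) = 1 := by
  push Not at hnt
  obtain ⟨g₀, hg₀⟩ := hnt
  set A := tracelessPart (ρ g₀ : Matrix (Fin 2) (Fin 2) ℂ)
  have hA : A ≠ 0 := fun h ↦
    (SpecialLinearGroup.eq_one_or_eq_neg_one_of_coe_eq_smul_one (sub_eq_zero.mp h)).elim hg₀.1 hg₀.2
  have hAtr : trace A = 0 := trace_tracelessPart _
  have hcomm (g) : Commute (ρ g : Matrix (Fin 2) (Fin 2) ℂ) (ρ g₀) :=
    ((Commute.all g g₀).map ρ).map SpecialLinearGroup.coeMonoidHom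
  refine (congrArg (fun S : Submodule ℂ (Matrix (Fin 2) (Fin 2) ℂ) ↦ Module.finrank ℂ S) ?_).trans
    (finrank_span_singleton hA)
  ext X
  simp only [Submodule.mem_inf, Submodule.mem_iInf, LinearMap.mem_ker, traceLinearMap_apply,
    LinearMap.sub_apply, LinearMap.comp_apply, LinearMap.mulLeft_apply, LinearMap.mulRight_apply,
    LinearMap.id_apply, sub_eq_zero, SpecialLinearGroup.mul_mul_inv_eq_self_iff_commute,
    Submodule.mem_span_singleton]
  constructor
  · rintro ⟨hX, hXρ⟩
    exact exists_smul_eq_of_commute_of_trace_eq_zero hX hAtr hA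
      (hXρ g₀).symm.tracelessPart_right.symm
  · rintro ⟨a, rfl⟩
    exact ⟨by simp [hAtr], fun g ↦ ((hcomm g).tracelessPart_right).smul_right a⟩
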